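/- Let G be a connected graph with maximum degree Δ ≥ 3 and let m be a positive integer. Then the chromatic number of G^{m/(m+1)} equals its clique number; explicitly, it equals (m/2)Δ + 1 if m is even and ((m-1)/2)Δ + 2 if m is odd. -/

import Mathlib

open SimpleGraph

/-- The `m`-th power of a graph `G`: two distinct vertices are adjacent iff
their distance in `G` is at most `m` (and they are connected). -/
def SimpleGraph.power {V : Type*} (G : SimpleGraph V) (m : ℕ) : SimpleGraph V where
  Adj x y := x ≠ y ∧ G.Reachable x y ∧ G.dist x y ≤ m
  symm := ⟨fun x y => by
    rintro ⟨h1, h2, h3⟩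
    exact ⟨h1.symm, h2.symm, by rwa [SimpleGraph.dist_comm]⟩⟩
  loopless := ⟨fun x => by simp⟩

/-- The `n`-subdivision of a graph `G`: every edge is replaced by a path of
length `n`.  Terminal vertices are `Sum.inl` vertices; each edge `e` carries
`n - 1` internal vertices `Sum.inr (e, i)`, `i : Fin (n-1)`, ordered along a
fixed orientation of `e`. -/
def SimpleGraph.subdivision {V : Type*} (G : SimpleGraph V) (n : ℕ) :
    SimpleGraph (V ⊕ (G.edgeSet × Fin (n - 1))) where
  Adj x y :=
    match x, y with
    | Sum.inl u, Sum.inl v => n = 1 ∧ G.Adj u v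
    | Sum.inl u, Sum.inr (e, i) =>
        (u = (Quot.out e.1).1 ∧ (i : ℕ) = 0) ∨
        (u = (Quot.out e.1).2 ∧ (i : ℕ) = n - 2)
    | Sum.inr (e, i), Sum.inl v =>
        (v = (Quot.out e.1).1 ∧ (i : ℕ) = 0) ∨
        (v = (Quot.out e.1).2 ∧ (i : ℕ) = n - 2)
    | Sum.inr (e, i), Sum.inr (f, j) =>
        e = f ∧ ((i : ℕ) + 1 = (j : ℕ) ∨ (j : ℕ) + 1 = (i : ℕ))
  symm := ⟨fun x y => by
    rcases x with u | ⟨e, i⟩ <;> rcases y with v | ⟨f, j⟩ <;>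
      simp only [] <;> intro h
    · exact ⟨h.1, h.2.symm⟩
    · exact h
    · exact h
    · obtain ⟨rfl, h2⟩ := h; exact ⟨rfl, h2.symm⟩⟩
  loopless := ⟨fun x => by
    rcases x with u | ⟨e, i⟩ <;> simp only []
    · rintro ⟨-, h⟩; exact G.loopless.irrefl u h
    · rintro ⟨-, h | h⟩ <;> omega⟩

/-!
Let `Δ` be the maximum degree; the level of an internal vertex of a subdivided edge is its
distance to the nearer endpoint, minus one.

Lower bound: around a vertex `v` of degree `Δ`, the internal vertices at distance at most `m / 2`
from `v`, together with `v` and, for odd `m`, one vertex at distance `(m + 1) / 2`, pairwise meet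
at `v` within distance `m`.

Upper bound: a path between internal vertices of different edges leaves the first and enters the
second through endpoints, and distinct branch vertices are `m + 1` apart. So two internal vertices
of equal level on different edges within distance `m` have the same nearer endpoint, and two
distinct middle vertices (odd `m`) are more than `m` apart. Hence it suffices to colour branch
vertices alike, middle vertices alike, and any other internal vertex of an edge `e` by its level
together with the colour of the half-edge `(a, e)`, `a` its nearer endpoint, in a proper
`Δ`-edge-colouring of the vertex–edge incidence graph. That graph is bipartite of maximum degree
`Δ ≥ 2`, so such a colouring exists by König's theorem, which follows from Hall's theorem.
-/

open Finset

section PermutationDecomposition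

variable {I : Type*} [Fintype I] [DecidableEq I]

theorem exists_perm_forall_pos_of_regular {D : ℕ} (hD : 0 < D) (M : I → I → ℕ)
    (hrow : ∀ i, ∑ j, M i j = D) (hcol : ∀ j, ∑ i, M i j = D) :
    ∃ σ : Equiv.Perm I, ∀ i, 0 < M i (σ i) := by
  let t (i : I) : Finset I := {j | 0 < M i j}
  have hall (s : Finset I) : #s ≤ #(s.biUnion t) := by
    refine Nat.le_of_mul_le_mul_left ?_ hD
    calc D * #s = ∑ i ∈ s, ∑ j ∈ s.biUnion t, M i j := by
          rw [mul_comm, ← smul_eq_mul, ← sum_const]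
          refine sum_congr rfl fun i hi => ?_
          rw [← hrow i]
          refine (sum_subset (subset_univ _) fun j _ hj => ?_).symm
          by_contra h
          exact hj (mem_biUnion.mpr ⟨i, hi, by simp [t, Nat.pos_of_ne_zero h]⟩)
      _ = ∑ j ∈ s.biUnion t, ∑ i ∈ s, M i j := sum_comm
      _ ≤ ∑ j ∈ s.biUnion t, ∑ i, M i j :=
          sum_le_sum fun j _ => sum_le_sum_of_subset (subset_univ s)
      _ = D * #(s.biUnion t) := by simp [hcol, mul_comm]
  obtain ⟨f, hf, hft⟩ := (all_card_le_biUnion_card_iff_exists_injective t).mp hall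
  refine ⟨Equiv.ofBijective f (Finite.injective_iff_bijective.mp hf), fun i => ?_⟩
  simpa [t] using hft i

/-- König's edge-colouring theorem for regular bipartite multigraphs, in matrix form. -/
theorem exists_perms_cover_of_regular (D : ℕ) (M : I → I → ℕ)
    (hrow : ∀ i, ∑ j, M i j = D) (hcol : ∀ j, ∑ i, M i j = D) :
    ∃ σ : Fin D → Equiv.Perm I, ∀ i j, 0 < M i j → ∃ c, σ c i = j := by
  induction D generalizing M with
  | zero =>
    refine ⟨Fin.elim0, fun i j hij => ?_⟩
    have := (sum_eq_zero_iff.mp (hrow i)) j (mem_univ j)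
    omega
  | succ D ih =>
    obtain ⟨σ₀, hσ₀⟩ := exists_perm_forall_pos_of_regular D.succ_pos M hrow hcol
    let P (i j : I) : ℕ := if σ₀ i = j then 1 else 0
    have hP (i j : I) : P i j ≤ M i j := by
      unfold P
      split_ifs with h
      · exact h ▸ hσ₀ i
      · exact Nat.zero_le _
    obtain ⟨σ, hσ⟩ := ih (fun i j => M i j - P i j)
      (fun i => by rw [sum_tsub_distrib _ fun j _ => hP i j, hrow]; simp [P])
      (fun j => by
        rw [sum_tsub_distrib _ fun i _ => hP i j, hcol]
        simp [P, ← Equiv.eq_symm_apply])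
    refine ⟨Fin.cons σ₀ σ, fun i j hij => ?_⟩
    by_cases h : σ₀ i = j
    · exact ⟨0, h⟩
    · obtain ⟨c, hc⟩ := hσ i j (by simpa [P, h] using hij)
      exact ⟨c.succ, hc⟩

theorem exists_perms_cover_of_symm (D : ℕ) (M : I → I → ℕ) (hsymm : ∀ i j, M i j = M j i)
    (hrow : ∀ i, ∑ j, M i j ≤ D) :
    ∃ σ : Fin D → Equiv.Perm I, ∀ i j, 0 < M i j → ∃ c, σ c i = j := by
  -- Padding the diagonal makes the matrix `D`-regular; by symmetry columns behave like rows.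
  let M' (i j : I) : ℕ := M i j + if i = j then D - ∑ k, M i k else 0
  have hrow' (i : I) : ∑ j, M' i j = D := by
    simp only [M', sum_add_distrib, sum_ite_eq, mem_univ, if_true]
    have := hrow i
    omega
  have hcol' (j : I) : ∑ i, M' i j = D := by
    simp only [M', sum_add_distrib, hsymm _ j, sum_ite_eq', mem_univ, if_true]
    have := hrow j
    omega
  obtain ⟨σ, hσ⟩ := exists_perms_cover_of_regular D M' hrow' hcol'
  exact ⟨σ, fun i j hij => hσ i j (by simp only [M']; omega)⟩

end PermutationDecomposition

namespace SimpleGraph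

section Power

variable {W : Type*} {H : SimpleGraph W}

theorem power_adj_iff {m : ℕ} {x y : W} :
    (H.power m).Adj x y ↔ x ≠ y ∧ ∃ p : H.Walk x y, p.length ≤ m := by
  refine ⟨fun ⟨hne, hr, hd⟩ => ⟨hne, ?_⟩, fun ⟨hne, p, hp⟩ => ⟨hne, p.reachable, ?_⟩⟩
  · obtain ⟨p, hp⟩ := hr.exists_walk_length_eq_dist
    exact ⟨p, hp ▸ hd⟩
  · exact (dist_le p).trans hp

theorem Walk.apply_le_apply_add_length (f : W → ℕ) (hf : ∀ x y, H.Adj x y → f y ≤ f x + 1)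
    {x y : W} (p : H.Walk x y) : f y ≤ f x + p.length := by
  induction p with
  | nil => simp
  | cons h _ ih => rw [Walk.length_cons]; linarith [hf _ _ h]

theorem IsNClique.chromaticNumber_eq_and_cliqueNum_eq [Finite W] {n : ℕ} {s : Finset W}
    (hs : H.IsNClique n s) (hc : H.Colorable n) :
    H.chromaticNumber = n ∧ H.cliqueNum = n := by
  obtain ⟨t, ht⟩ := H.exists_isNClique_cliqueNum
  refine ⟨le_antisymm hc.chromaticNumber_le (hs.card_eq ▸ hs.isClique.card_le_chromaticNumber),
    le_antisymm (ht.card_eq ▸ ht.isClique.card_le_of_colorable hc) ?_⟩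
  exact hs.card_eq ▸ IsClique.card_le_cliqueNum (tc := hs.isClique)

end Power

section HalfEdgeLabeling

variable {V : Type*}

/-- A proper edge colouring of the vertex–edge incidence graph of `G`. -/
structure IsProperHalfEdgeLabeling {α : Type*} (G : SimpleGraph V) (ψ : V → Sym2 V → α) :
    Prop where
  injOn : ∀ v, Set.InjOn (ψ v) (G.incidenceSet v)
  eq_of_eq : ∀ e ∈ G.edgeSet, ∀ a ∈ e, ∀ b ∈ e, ψ a e = ψ b e → a = b

theorem exists_isProperHalfEdgeLabeling [Fintype V] [DecidableEq V] (G : SimpleGraph V)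
    [DecidableRel G.Adj] {D : ℕ} (hD : 2 ≤ D) (hdeg : ∀ v, G.degree v ≤ D) :
    ∃ ψ : V → Sym2 V → Fin D, G.IsProperHalfEdgeLabeling ψ := by
  classical
  -- The symmetric incidence matrix on `V ⊕ Sym2 V`: the half-edge `(v, e)` is labelled by the
  -- index of a permutation sending `v` to `e`.
  let M : V ⊕ Sym2 V → V ⊕ Sym2 V → ℕ
    | .inl v, .inr e | .inr e, .inl v => if e ∈ G.incidenceSet v then 1 else 0
    | _, _ => 0
  have hrow : ∀ i, ∑ j, M i j ≤ D := by
    rintro (v | e)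
    · simpa [M, Fintype.sum_sum_type, ← mem_incidenceFinset, card_incidenceFinset_eq_degree]
        using hdeg v
    · refine le_trans ?_ hD
      induction e using Sym2.ind with | _ a b => ?_
      calc ∑ j, M (.inr s(a, b)) j = #{v | s(a, b) ∈ G.incidenceSet v} := by
            simp [M, Fintype.sum_sum_type]
        _ ≤ #{a, b} := Finset.card_le_card fun v => by simp [incidenceSet]
        _ ≤ 2 := Finset.card_le_two
  obtain ⟨σ, hσ⟩ := exists_perms_cover_of_symm D M (by rintro (_ | _) (_ | _) <;> rfl) hrow
  let ψ (v : V) (e : Sym2 V) : Fin D :=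
    if h : ∃ c, σ c (.inl v) = .inr e then h.choose else ⟨0, by omega⟩
  have hψ {v e} (he : e ∈ G.incidenceSet v) : σ (ψ v e) (.inl v) = .inr e := by
    have h : ∃ c, σ c (.inl v) = .inr e := hσ _ _ (by simp [M, he])
    simpa [ψ, h] using h.choose_spec
  refine ⟨ψ, ⟨fun v e he f hf hef => Sum.inr_injective ((hψ he).symm.trans (hef ▸ hψ hf)),
    fun e he a ha b hb hab => Sum.inl_injective ((σ (ψ a e)).injective ?_)⟩⟩
  rw [hψ ⟨he, ha⟩, hab, hψ ⟨he, hb⟩]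

end HalfEdgeLabeling

variable {V : Type*} {G : SimpleGraph V} {m : ℕ}

/-- The orientation `(edgeFst e, edgeSnd e)` of `e` along which `SimpleGraph.subdivision`
numbers the internal vertices of `e`. -/
noncomputable def edgeFst (e : G.edgeSet) : V := (Quot.out (e : Sym2 V)).1

noncomputable def edgeSnd (e : G.edgeSet) : V := (Quot.out (e : Sym2 V)).2

theorem mk_edgeFst_edgeSnd (e : G.edgeSet) : s(edgeFst e, edgeSnd e) = (e : Sym2 V) :=
  Quot.out_eq _

theorem adj_edgeFst_edgeSnd (e : G.edgeSet) : G.Adj (edgeFst e) (edgeSnd e) := by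
  rw [← mem_edgeSet, mk_edgeFst_edgeSnd]
  exact e.2

theorem mem_iff_eq_edgeFst_or_eq_edgeSnd {e : G.edgeSet} {a : V} :
    a ∈ (e : Sym2 V) ↔ a = edgeFst e ∨ a = edgeSnd e := by
  rw [← mk_edgeFst_edgeSnd, Sym2.mem_iff]

theorem edgeFst_mem (e : G.edgeSet) : edgeFst e ∈ (e : Sym2 V) :=
  mem_iff_eq_edgeFst_or_eq_edgeSnd.2 (.inl rfl)

theorem edgeSnd_mem (e : G.edgeSet) : edgeSnd e ∈ (e : Sym2 V) :=
  mem_iff_eq_edgeFst_or_eq_edgeSnd.2 (.inr rfl)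

theorem subdivision_adj_inl_inl {u v : V} :
    (G.subdivision (m + 1)).Adj (.inl u) (.inl v) ↔ m + 1 = 1 ∧ G.Adj u v := Iff.rfl

theorem subdivision_adj_inl_inr {u : V} {e : G.edgeSet} {i : Fin (m + 1 - 1)} :
    (G.subdivision (m + 1)).Adj (.inl u) (.inr (e, i)) ↔
      (u = edgeFst e ∧ (i : ℕ) = 0) ∨ (u = edgeSnd e ∧ (i : ℕ) = m - 1) := Iff.rfl

theorem subdivision_adj_inr_inl {u : V} {e : G.edgeSet} {i : Fin (m + 1 - 1)} :
    (G.subdivision (m + 1)).Adj (.inr (e, i)) (.inl u) ↔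
      (u = edgeFst e ∧ (i : ℕ) = 0) ∨ (u = edgeSnd e ∧ (i : ℕ) = m - 1) := Iff.rfl

theorem subdivision_adj_inr_inr {e f : G.edgeSet} {i j : Fin (m + 1 - 1)} :
    (G.subdivision (m + 1)).Adj (.inr (e, i)) (.inr (f, j)) ↔
      e = f ∧ ((i : ℕ) + 1 = j ∨ (j : ℕ) + 1 = i) := Iff.rfl

theorem exists_walk_inr_inr (e : G.edgeSet) {i j : Fin (m + 1 - 1)} (hij : i ≤ j) :
    ∃ p : (G.subdivision (m + 1)).Walk (.inr (e, i)) (.inr (e, j)), p.length = j - i := by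
  obtain ⟨k, hk⟩ := Nat.exists_eq_add_of_le (Fin.le_def.mp hij)
  induction k generalizing j with
  | zero =>
    obtain rfl : j = i := Fin.ext hk
    exact ⟨.nil, by simp⟩
  | succ k ih =>
    obtain ⟨p, hp⟩ := ih (j := ⟨i + k, by omega⟩) (Fin.le_def.mpr (by simp)) rfl
    have h : (G.subdivision (m + 1)).Adj (.inr (e, ⟨i + k, by omega⟩)) (.inr (e, j)) :=
      subdivision_adj_inr_inr.mpr ⟨rfl, .inl (by simp; omega)⟩
    exact ⟨p.concat h, by simp [hp]; omega⟩

noncomputable def subdivisionExtend (m : ℕ) (g : V → ℕ) :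
    V ⊕ (G.edgeSet × Fin (m + 1 - 1)) → ℕ
  | .inl w => g w
  | .inr (e, i) => min (g (edgeFst e) + (i + 1)) (g (edgeSnd e) + (m - i))

theorem subdivisionExtend_le_of_adj {g : V → ℕ}
    (hg : ∀ a b, G.Adj a b → g b ≤ g a + (m + 1)) {z z' : V ⊕ (G.edgeSet × Fin (m + 1 - 1))}
    (h : (G.subdivision (m + 1)).Adj z z') :
    subdivisionExtend m g z' ≤ subdivisionExtend m g z + 1 := by
  rcases z with u | ⟨e, i⟩ <;> rcases z' with w | ⟨f, j⟩
  · obtain ⟨hm, huw⟩ := subdivision_adj_inl_inl.mp h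
    have := hg u w huw
    simp only [subdivisionExtend]
    omega
  · rcases subdivision_adj_inl_inr.mp h with ⟨rfl, hj⟩ | ⟨rfl, hj⟩ <;>
      simp only [subdivisionExtend] <;> omega
  · have := hg _ _ (adj_edgeFst_edgeSnd e)
    have := hg _ _ (adj_edgeFst_edgeSnd e).symm
    rcases subdivision_adj_inr_inl.mp h with ⟨rfl, hi⟩ | ⟨rfl, hi⟩ <;>
      simp only [subdivisionExtend] <;> omega
  · obtain ⟨rfl, hij⟩ := subdivision_adj_inr_inr.mp h
    simp only [subdivisionExtend]
    omega

theorem le_length_of_walk_inl (hG : G.Connected) {a : V}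
    {z : V ⊕ (G.edgeSet × Fin (m + 1 - 1))}
    (p : (G.subdivision (m + 1)).Walk (.inl a) z) :
    subdivisionExtend m (fun w => (m + 1) * G.dist a w) z ≤ p.length := by
  have hlip (b c : V) (hbc : G.Adj b c) :
      (m + 1) * G.dist a c ≤ (m + 1) * G.dist a b + (m + 1) := by
    have := hG.dist_triangle (u := a) (v := b) (w := c)
    rw [dist_eq_one_iff_adj.mpr hbc] at this
    nlinarith
  simpa [subdivisionExtend] using
    p.apply_le_apply_add_length _ fun _ _ h => subdivisionExtend_le_of_adj hlip h

theorem mul_dist_le_length (hG : G.Connected) {a b : V}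
    (p : (G.subdivision (m + 1)).Walk (.inl a) (.inl b)) : (m + 1) * G.dist a b ≤ p.length :=
  le_length_of_walk_inl hG p

theorem not_power_adj_inl_inl (hG : G.Connected) {a b : V} :
    ¬((G.subdivision (m + 1)).power m).Adj (.inl a) (.inl b) := by
  intro h
  obtain ⟨hne, p, hp⟩ := power_adj_iff.mp h
  have := mul_dist_le_length hG p
  have := hG.pos_dist_of_ne fun hab : a = b => hne (hab ▸ rfl)
  nlinarith

/-- The endpoint of `e` nearer to its `i`-th internal vertex (`edgeSnd e` for the middle one). -/
noncomputable def nearEnd (m : ℕ) (e : G.edgeSet) (i : ℕ) : V :=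
  if 2 * i + 1 < m then edgeFst e else edgeSnd e

theorem nearEnd_mem (e : G.edgeSet) (i : ℕ) : nearEnd m e i ∈ (e : Sym2 V) := by
  unfold nearEnd
  split_ifs
  exacts [edgeFst_mem e, edgeSnd_mem e]

section Arms

variable [DecidableEq V]

/-- The distance in `G.subdivision (m + 1)` from the `i`-th internal vertex of `e` to the
endpoint `a` of `e`. -/
noncomputable def armLength (m : ℕ) (e : G.edgeSet) (i : ℕ) (a : V) : ℕ :=
  if a = edgeFst e then i + 1 else m - i

@[simp]
theorem armLength_edgeFst (e : G.edgeSet) (i : ℕ) : armLength m e i (edgeFst e) = i + 1 :=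
  if_pos rfl

@[simp]
theorem armLength_edgeSnd (e : G.edgeSet) (i : ℕ) : armLength m e i (edgeSnd e) = m - i :=
  if_neg (adj_edgeFst_edgeSnd e).ne'

/-- The internal vertex of `e` at distance `l + 1` from its endpoint `a`. -/
noncomputable def armVertex (a : V) (e : G.edgeSet) (l : Fin (m + 1 - 1)) :
    V ⊕ (G.edgeSet × Fin (m + 1 - 1)) :=
  .inr (e, if a = edgeFst e then l else l.rev)

@[simp]
theorem inl_ne_armVertex (a b : V) (e : G.edgeSet) (l : Fin (m + 1 - 1)) :
    .inl b ≠ armVertex a e l :=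
  Sum.inl_ne_inr

@[simp]
theorem armVertex_ne_inl (a b : V) (e : G.edgeSet) (l : Fin (m + 1 - 1)) :
    armVertex a e l ≠ .inl b :=
  Sum.inr_ne_inl

theorem armVertex_inj {a : V} {e f : G.edgeSet} {k l : Fin (m + 1 - 1)} :
    armVertex a e k = armVertex a f l ↔ e = f ∧ k = l := by
  refine ⟨fun h => ?_, fun ⟨he, hkl⟩ => he ▸ hkl ▸ rfl⟩
  obtain ⟨rfl, h⟩ := Prod.mk.inj (Sum.inr_injective h)
  split_ifs at h <;> simp_all

theorem exists_walk_inl_armVertex {a : V} {e : G.edgeSet} (ha : a ∈ (e : Sym2 V))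
    (l : Fin (m + 1 - 1)) :
    ∃ p : (G.subdivision (m + 1)).Walk (.inl a) (armVertex a e l), p.length = l + 1 := by
  have hl := l.isLt
  rcases mem_iff_eq_edgeFst_or_eq_edgeSnd.mp ha with rfl | rfl
  · obtain ⟨p, hp⟩ :=
      exists_walk_inr_inr e (i := ⟨0, by omega⟩) (j := l) (Fin.le_def.mpr (by simp))
    have h : (G.subdivision (m + 1)).Adj (.inl (edgeFst e)) (.inr (e, ⟨0, by omega⟩)) :=
      subdivision_adj_inl_inr.mpr (.inl ⟨rfl, rfl⟩)
    rw [show armVertex (edgeFst e) e l = .inr (e, l) by simp [armVertex]]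
    exact ⟨.cons h p, by simp [hp]⟩
  · obtain ⟨p, hp⟩ :=
      exists_walk_inr_inr e (i := l.rev) (j := ⟨m - 1, by omega⟩) (Fin.le_def.mpr (by simp; omega))
    have h : (G.subdivision (m + 1)).Adj (.inl (edgeSnd e)) (.inr (e, ⟨m - 1, by omega⟩)) :=
      subdivision_adj_inl_inr.mpr (.inr ⟨rfl, rfl⟩)
    rw [show armVertex (edgeSnd e) e l = .inr (e, l.rev) by
      simp [armVertex, (adj_edgeFst_edgeSnd e).ne']]
    exact ⟨.cons h p.reverse, by simp [hp]; omega⟩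

theorem exists_mul_dist_add_armLength_le_length (hG : G.Connected) {a : V} {f : G.edgeSet}
    {j : Fin (m + 1 - 1)} (p : (G.subdivision (m + 1)).Walk (.inl a) (.inr (f, j))) :
    ∃ b ∈ (f : Sym2 V), (m + 1) * G.dist a b + armLength m f j b ≤ p.length := by
  rcases min_le_iff.mp (le_length_of_walk_inl hG p) with h | h
  · exact ⟨_, edgeFst_mem f, by simpa using h⟩
  · exact ⟨_, edgeSnd_mem f, by simpa using h⟩

theorem exists_walk_inl_of_walk_inr {e : G.edgeSet} {i : Fin (m + 1 - 1)}
    {z : V ⊕ (G.edgeSet × Fin (m + 1 - 1))} (p : (G.subdivision (m + 1)).Walk (.inr (e, i)) z)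
    (hz : ∀ j, z ≠ .inr (e, j)) :
    ∃ a ∈ (e : Sym2 V), ∃ q : (G.subdivision (m + 1)).Walk (.inl a) z,
      armLength m e i a + q.length ≤ p.length := by
  generalize hx : Sum.inr (e, i) = x at p
  induction p generalizing i with
  | nil => exact absurd hx.symm (hz i)
  | @cons _ y _ h p ih =>
    subst hx
    rcases y with a | ⟨f, j⟩
    · rcases subdivision_adj_inr_inl.mp h with ⟨rfl, hi⟩ | ⟨rfl, hi⟩
      · exact ⟨_, edgeFst_mem e, p, by simp [hi, add_comm]⟩
      · exact ⟨_, edgeSnd_mem e, p, by simp; omega⟩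
    · obtain ⟨rfl, hij⟩ := subdivision_adj_inr_inr.mp h
      obtain ⟨a, ha, q, hq⟩ := ih hz rfl
      have : armLength m e i a ≤ armLength m e j a + 1 := by
        unfold armLength
        split_ifs <;> omega
      exact ⟨a, ha, q, by simp; omega⟩

theorem exists_common_endpoint_of_power_adj (hG : G.Connected) {e f : G.edgeSet} (hef : e ≠ f)
    {i j : Fin (m + 1 - 1)}
    (h : ((G.subdivision (m + 1)).power m).Adj (.inr (e, i)) (.inr (f, j))) :
    ∃ a ∈ (e : Sym2 V), a ∈ (f : Sym2 V) ∧ armLength m e i a + armLength m f j a ≤ m := by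
  obtain ⟨-, p, hp⟩ := power_adj_iff.mp h
  obtain ⟨a, ha, q, hq⟩ := exists_walk_inl_of_walk_inr p fun k hk => hef (by simp_all)
  obtain ⟨b, hb, hqb⟩ := exists_mul_dist_add_armLength_le_length hG q
  obtain rfl : a = b := by
    by_contra hab
    have := hG.pos_dist_of_ne hab
    nlinarith
  exact ⟨a, ha, hb, by omega⟩

theorem exists_isNClique_power_subdivision {v w : V} (hvw : G.Adj v w)
    [Fintype (G.neighborSet v)] :
    ∃ s, ((G.subdivision (m + 1)).power m).IsNClique (G.degree v * (m / 2) + m % 2 + 1) s := by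
  let f : Option ((G.neighborSet v × Fin (m / 2)) ⊕ Fin (m % 2)) →
      V ⊕ (G.edgeSet × Fin (m + 1 - 1))
    | none => .inl v
    | some (.inl (u, l)) => armVertex v ⟨s(v, u), u.2⟩ (Fin.castLE (by omega) l)
    | some (.inr k) => armVertex v ⟨s(v, w), hvw⟩ ⟨m / 2, by have := k.isLt; omega⟩
  let r : Option ((G.neighborSet v × Fin (m / 2)) ⊕ Fin (m % 2)) → ℕ
    | none => 0
    | some (.inl (_, l)) => l + 1
    | some (.inr _) => m / 2 + 1
  have hwalk a : ∃ p : (G.subdivision (m + 1)).Walk (.inl v) (f a), p.length = r a := by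
    rcases a with _ | ⟨u, l⟩ | k
    · exact ⟨.nil, rfl⟩
    · exact exists_walk_inl_armVertex (Sym2.mem_mk_left v u) _
    · exact exists_walk_inl_armVertex (Sym2.mem_mk_left v w) _
  have hr {a b} (hab : a ≠ b) : r a + r b ≤ m := by
    rcases a with _ | ⟨u, l⟩ | k <;> rcases b with _ | ⟨u', l'⟩ | k' <;> simp only [r]
    all_goals first
      | omega
      | (have := k.isLt; omega)
      | (have := k'.isLt; omega)
      | exact absurd rfl hab
      | exact absurd (congrArg (some ∘ Sum.inr) (Fin.ext (by omega))) hab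
  have hf : Function.Injective f := by
    rintro (_ | ⟨u, l⟩ | k) (_ | ⟨u', l'⟩ | k') h <;>
      simp only [f, armVertex_inj, inl_ne_armVertex, armVertex_ne_inl, Subtype.ext_iff,
        Sym2.congr_right, Fin.ext_iff, Fin.val_castLE] at h ⊢
    all_goals first
      | omega
      | (have := h.2; omega)
      | rw [Subtype.ext h.1, Fin.ext h.2]
      | exact congrArg (some ∘ Sum.inr) (Fin.ext (by omega))
  let φ : (⊤ : SimpleGraph _) →g (G.subdivision (m + 1)).power m :=
    { toFun := f
      map_rel' := fun {a b} hab => by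
        obtain ⟨p, hp⟩ := hwalk a
        obtain ⟨q, hq⟩ := hwalk b
        exact power_adj_iff.mpr ⟨hf.ne hab, p.reverse.append q, by simpa [hp, hq] using hr hab⟩ }
  have := isNClique_map_copy_top (φ.toCopy hf)
  simp only [Fintype.card_option, Fintype.card_sum, Fintype.card_prod, Fintype.card_fin,
    card_neighborSet_eq_degree] at this
  exact ⟨_, this⟩

theorem armLength_nearEnd (e : G.edgeSet) {i : ℕ} (hi : i < m) :
    armLength m e i (nearEnd m e i) = min (i + 1) (m - i) := by
  unfold nearEnd
  split_ifs <;> simp <;> omega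

theorem armLength_of_ne_nearEnd {e : G.edgeSet} {a : V} (ha : a ∈ (e : Sym2 V)) {i : ℕ}
    (hne : a ≠ nearEnd m e i) : armLength m e i a = max (i + 1) (m - i) := by
  unfold nearEnd at hne
  rcases mem_iff_eq_edgeFst_or_eq_edgeSnd.mp ha with rfl | rfl <;> split_ifs at hne <;>
    simp_all <;> omega

theorem min_le_armLength {e : G.edgeSet} {a : V} (ha : a ∈ (e : Sym2 V)) {i : ℕ} (hi : i < m) :
    min (i + 1) (m - i) ≤ armLength m e i a := by
  by_cases hne : a = nearEnd m e i
  · rw [hne, armLength_nearEnd e hi]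
  · rw [armLength_of_ne_nearEnd ha hne]
    omega

theorem armLength_injective {e : G.edgeSet} {a : V} {i j : ℕ} (hi : i < m) (hj : j < m)
    (h : armLength m e i a = armLength m e j a) : i = j := by
  unfold armLength at h
  split_ifs at h <;> omega

noncomputable def subdivisionColor {D : ℕ} (ψ : V → Sym2 V → Fin D) :
    V ⊕ (G.edgeSet × Fin (m + 1 - 1)) → Option ((Fin (m / 2) × Fin D) ⊕ Fin (m % 2))
  | .inl _ => none
  | .inr (e, i) =>
    if h : 2 * (i : ℕ) + 1 = m then some (.inr ⟨0, by omega⟩)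
    else some (.inl (⟨min i (m - 1 - i), by have := i.isLt; omega⟩, ψ (nearEnd m e i) e))

theorem not_power_adj_of_middle (hG : G.Connected) {e f : G.edgeSet} {i j : Fin (m + 1 - 1)}
    (hi : 2 * (i : ℕ) + 1 = m) (hj : 2 * (j : ℕ) + 1 = m) :
    ¬((G.subdivision (m + 1)).power m).Adj (.inr (e, i)) (.inr (f, j)) := by
  intro h
  by_cases hef : e = f
  · obtain rfl : i = j := Fin.ext (by omega)
    exact h.ne (hef ▸ rfl)
  · obtain ⟨c, hce, hcf, hsum⟩ := exists_common_endpoint_of_power_adj hG hef h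
    have := min_le_armLength hce (by omega : (i : ℕ) < m)
    have := min_le_armLength hcf (by omega : (j : ℕ) < m)
    omega

theorem not_power_adj_of_subdivisionColor_eq (hG : G.Connected) {D : ℕ}
    {ψ : V → Sym2 V → Fin D} (hψ : G.IsProperHalfEdgeLabeling ψ) {e f : G.edgeSet}
    {i j : Fin (m + 1 - 1)} (hij : min (i : ℕ) (m - 1 - i) = min (j : ℕ) (m - 1 - j))
    (hψij : ψ (nearEnd m e i) e = ψ (nearEnd m f j) f) :
    ¬((G.subdivision (m + 1)).power m).Adj (.inr (e, i)) (.inr (f, j)) := by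
  intro h
  have hi : (i : ℕ) < m := by have := i.isLt; omega
  have hj : (j : ℕ) < m := by have := j.isLt; omega
  obtain ⟨hnear, rfl⟩ : nearEnd m e i = nearEnd m f j ∧ e = f := by
    by_cases hef : e = f
    · subst hef
      exact ⟨hψ.eq_of_eq _ e.2 _ (nearEnd_mem e i) _ (nearEnd_mem e j) hψij, rfl⟩
    · -- Both vertices lie within distance `m` of a common endpoint, which must be nearer to both.
      obtain ⟨c, hce, hcf, hsum⟩ := exists_common_endpoint_of_power_adj hG hef h
      have hc {g : G.edgeSet} {k : Fin (m + 1 - 1)} (hcg : c ∈ (g : Sym2 V))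
          (hk : armLength m g k c < max ((k : ℕ) + 1) (m - k)) : c = nearEnd m g k := by
        by_contra hne
        exact hk.ne (armLength_of_ne_nearEnd hcg hne)
      have := min_le_armLength hce hi
      have := min_le_armLength hcf hj
      rw [← hc (k := i) hce (by omega), ← hc (k := j) hcf (by omega)] at hψij
      exact absurd (Subtype.ext (hψ.injOn c ⟨e.2, hce⟩ ⟨f.2, hcf⟩ hψij)) hef
  obtain rfl : i = j := Fin.ext <| armLength_injective (e := e) hi hj <| by
    rw [armLength_nearEnd e hi, hnear, armLength_nearEnd e hj]
    omega
  exact h.ne rfl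

theorem subdivisionColor_ne_of_power_adj (hG : G.Connected) {D : ℕ} {ψ : V → Sym2 V → Fin D}
    (hψ : G.IsProperHalfEdgeLabeling ψ) {z z' : V ⊕ (G.edgeSet × Fin (m + 1 - 1))}
    (h : ((G.subdivision (m + 1)).power m).Adj z z') :
    subdivisionColor ψ z ≠ subdivisionColor ψ z' := by
  rcases z with u | ⟨e, i⟩ <;> rcases z' with w | ⟨f, j⟩ <;> simp only [subdivisionColor]
  · exact absurd h (not_power_adj_inl_inl hG)
  · split_ifs <;> simp
  · split_ifs <;> simp
  · split_ifs with hi hj hj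
    · exact absurd h (not_power_adj_of_middle hG hi hj)
    · simp
    · simp
    · simp only [ne_eq, Option.some.injEq, Sum.inl.injEq, Prod.mk.injEq, Fin.mk.injEq, not_and]
      exact fun hij hψij => not_power_adj_of_subdivisionColor_eq hG hψ hij hψij h

end Arms

theorem colorable_power_subdivision [Fintype V] [DecidableRel G.Adj] (hG : G.Connected) {D : ℕ}
    (hD : 2 ≤ D) (hdeg : ∀ v, G.degree v ≤ D) :
    ((G.subdivision (m + 1)).power m).Colorable (m / 2 * D + m % 2 + 1) := by
  classical
  obtain ⟨ψ, hψ⟩ := exists_isProperHalfEdgeLabeling G hD hdeg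
  simpa using (Coloring.mk (subdivisionColor (m := m) ψ)
    fun h => subdivisionColor_ne_of_power_adj hG hψ h).colorable

end SimpleGraph

theorem chromatic_m_over_m_add_one_general {V : Type*} [Fintype V] (G : SimpleGraph V)
    [DecidableRel G.Adj] (hG : G.Connected) (hΔ : 3 ≤ G.maxDegree)
    (m : ℕ) :
    ((G.subdivision (m + 1)).power m).chromaticNumber
        = (((G.subdivision (m + 1)).power m).cliqueNum : ℕ∞) ∧
    ((G.subdivision (m + 1)).power m).cliqueNum
        = if Even m then m / 2 * G.maxDegree + 1 else (m - 1) / 2 * G.maxDegree + 2 := by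
  classical
  have := hG.nonempty
  obtain ⟨v, hv⟩ := G.exists_maximal_degree_vertex
  obtain ⟨w, hvw⟩ := G.degree_pos_iff_exists_adj v |>.mp (by omega)
  obtain ⟨s, hs⟩ := exists_isNClique_power_subdivision (m := m) hvw
  have hc := colorable_power_subdivision (m := m) hG (by omega) G.degree_le_maxDegree
  rw [← hv, mul_comm] at hs
  obtain ⟨hχ, hω⟩ := hs.chromaticNumber_eq_and_cliqueNum_eq hc
  refine ⟨by rw [hχ, hω], hω.trans ?_⟩
  split_ifs with hm
  · rw [Nat.even_iff.mp hm]
  · have hm := Nat.odd_iff.mp (Nat.not_even_iff_odd.mp hm)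
    rw [hm, show (m - 1) / 2 = m / 2 by omega]

theorem chromatic_m_over_m_add_one {V : Type*} [Fintype V] (G : SimpleGraph V)
    [DecidableRel G.Adj] (hG : G.Connected) (hΔ : 3 ≤ G.maxDegree)
    (m : ℕ) (hm : 0 < m) :
    ((G.subdivision (m + 1)).power m).chromaticNumber
        = (((G.subdivision (m + 1)).power m).cliqueNum : ℕ∞) ∧
    ((G.subdivision (m + 1)).power m).cliqueNum
        = if Even m then m / 2 * G.maxDegree + 1 else (m - 1) / 2 * G.maxDegree + 2 :=
  chromatic_m_over_m_add_one_general G hG hΔ m
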